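/- Consider a gradient update step for the balanced two-layer model: given W₀ with W₀ = Q D_W Rᵀ and Σ = Q S Rᵀ for the same orthogonal (or orthonormal-column) frames Q, R and nonnegative diagonal D_W, S, the gradient-flow update direction −(W₀ − Σ)(W₀ᵀW₀)^{1/2} − (W₀W₀ᵀ)^{1/2}(W₀ − Σ) is also of the form Q D' Rᵀ for some diagonal D'. Hence joint diagonalizability with Σ is preserved by the dynamics. -/

import Mathlib

/-!
Because `RᵀR = QᵀQ = 1`, every product `(X * A * Rᵀ) * (R * B * Y)` collapses to `X * (A * B) * Y`.
Hence `R D_W Rᵀ` is positive semidefinite with square `W₀ᵀW₀`, so by uniqueness of positive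
semidefinite square roots (the square root is `cfc Real.sqrt`) it is `(W₀ᵀW₀)^{1/2}`; likewise
`(W₀W₀ᵀ)^{1/2} = Q D_W Qᵀ`. The update direction then collapses to `Q` times a product of
diagonal matrices times `Rᵀ`.
-/

open Matrix

namespace Matrix.PosSemidef

open scoped ComplexOrder

/-- The positive semidefinite square root of a positive semidefinite matrix
(the definition removed from Mathlib, restated verbatim). -/
noncomputable def sqrt {n 𝕜 : Type*} [Fintype n] [RCLike 𝕜] [DecidableEq n]
    {A : Matrix n n 𝕜} (hA : PosSemidef A) : Matrix n n 𝕜 :=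
  hA.1.eigenvectorUnitary.1 * diagonal ((↑) ∘ (fun x : ℝ => Real.sqrt x) ∘ hA.1.eigenvalues) *
    (star hA.1.eigenvectorUnitary : Matrix n n 𝕜)

end Matrix.PosSemidef

namespace Matrix

theorem mul_mul_mul_mul_of_mul_eq_one {m n k l α : Type*} [Fintype n] [Fintype k] [DecidableEq k]
    [Semiring α] {R' : Matrix k n α} {R : Matrix n k α} (h : R' * R = 1)
    (Q : Matrix m k α) (A B : Matrix k k α) (P : Matrix k l α) :
    Q * A * R' * (R * B * P) = Q * (A * B) * P := by
  simp only [Matrix.mul_assoc, ← Matrix.mul_assoc R', h, Matrix.one_mul]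

theorem transpose_mul_diagonal_mul_transpose {m n k α : Type*} [CommSemiring α] [DecidableEq k]
    [Fintype k] [Fintype n] (Q : Matrix m k α) (d : k → α) (R : Matrix n k α) :
    (Q * diagonal d * Rᵀ)ᵀ = R * diagonal d * Qᵀ := by
  simp only [transpose_mul, transpose_transpose, diagonal_transpose, Matrix.mul_assoc]

section Sqrt

open scoped ComplexOrder

variable {n 𝕜 : Type*} [Fintype n] [DecidableEq n] [RCLike 𝕜]

theorem PosSemidef.sqrt_eq_cfc {A : Matrix n n 𝕜} (hA : A.PosSemidef) :
    hA.sqrt = cfc Real.sqrt A := by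
  rw [hA.1.cfc_eq]
  simp [PosSemidef.sqrt, IsHermitian.cfc, Unitary.conjStarAlgAut_apply, Function.comp_def]

theorem PosSemidef.sqrt_eq_of_sq_eq {A B : Matrix n n 𝕜} (hA : A.PosSemidef)
    (hB : B.PosSemidef) (h : B ^ 2 = A) : hA.sqrt = B := by
  have hB_sa : IsSelfAdjoint B := hB.1
  rw [hA.sqrt_eq_cfc, ← h, ← cfc_comp_pow (f := Real.sqrt) (a := B) (n := 2)]
  conv_rhs => rw [← cfc_id ℝ B]
  refine cfc_congr fun x hx => ?_
  obtain ⟨i, rfl⟩ := hB.1.spectrum_real_eq_range_eigenvalues ▸ hx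
  simp [Real.sqrt_sq (hB.eigenvalues_nonneg i)]

theorem PosSemidef.sqrt_eq_mul_diagonal_mul_transpose {k : Type*} [Fintype k] [DecidableEq k]
    {A : Matrix n n ℝ} (hA : A.PosSemidef) {R : Matrix n k ℝ} (hR : Rᵀ * R = 1)
    {d : k → ℝ} (hd : ∀ i, 0 ≤ d i) (h : A = R * diagonal (fun i => d i * d i) * Rᵀ) :
    hA.sqrt = R * diagonal d * Rᵀ := by
  refine hA.sqrt_eq_of_sq_eq ?_ ?_
  · simpa [Matrix.mul_assoc] using (PosSemidef.diagonal hd).mul_mul_conjTranspose_same R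
  · rw [sq, mul_mul_mul_mul_of_mul_eq_one hR, diagonal_mul_diagonal, h]

end Sqrt

end Matrix

theorem joint_diagonalizability_preserved_general (dout di D : ℕ)
    (Q : Matrix (Fin dout) (Fin D) ℝ) (R : Matrix (Fin di) (Fin D) ℝ)
    (hQ : Qᵀ * Q = 1) (hR : Rᵀ * R = 1)
    (DW S : Fin D → ℝ) (hDW : ∀ k, 0 ≤ DW k)
    (W0 Sig : Matrix (Fin dout) (Fin di) ℝ)
    (hW0 : W0 = Q * Matrix.diagonal DW * Rᵀ)
    (hSig : Sig = Q * Matrix.diagonal S * Rᵀ)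
    (h1 : (W0ᵀ * W0).PosSemidef) (h2 : (W0 * W0ᵀ).PosSemidef) :
    (∃ D' : Fin D → ℝ,
      -(W0 - Sig) * h1.sqrt - h2.sqrt * (W0 - Sig) = Q * Matrix.diagonal D' * Rᵀ) ∧
    -(W0 - Sig) * h1.sqrt - h2.sqrt * (W0 - Sig)
      = Q * ((2 : ℝ) • (Matrix.diagonal DW * (Matrix.diagonal S - Matrix.diagonal DW))) * Rᵀ := by
  have hs1 : h1.sqrt = R * diagonal DW * Rᵀ := by
    refine h1.sqrt_eq_mul_diagonal_mul_transpose hR hDW ?_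
    rw [hW0, transpose_mul_diagonal_mul_transpose, mul_mul_mul_mul_of_mul_eq_one hQ,
      diagonal_mul_diagonal]
  have hs2 : h2.sqrt = Q * diagonal DW * Qᵀ := by
    refine h2.sqrt_eq_mul_diagonal_mul_transpose hQ hDW ?_
    rw [hW0, transpose_mul_diagonal_mul_transpose, mul_mul_mul_mul_of_mul_eq_one hR,
      diagonal_mul_diagonal]
  have hdiff : W0 - Sig = Q * diagonal (fun k => DW k - S k) * Rᵀ := by
    rw [hW0, hSig, ← Matrix.sub_mul, ← Matrix.mul_sub, diagonal_sub]
  have key : -(W0 - Sig) * h1.sqrt - h2.sqrt * (W0 - Sig)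
      = Q * diagonal (fun k => 2 * (DW k * (S k - DW k))) * Rᵀ := by
    rw [hs1, hs2, hdiff, Matrix.neg_mul, mul_mul_mul_mul_of_mul_eq_one hR,
      mul_mul_mul_mul_of_mul_eq_one hQ, ← Matrix.neg_mul, ← Matrix.mul_neg, ← Matrix.sub_mul,
      ← Matrix.mul_sub, diagonal_mul_diagonal, diagonal_mul_diagonal, diagonal_neg, diagonal_sub]
    congr 3
    ext k
    ring
  refine ⟨⟨_, key⟩, key.trans ?_⟩
  rw [diagonal_sub, diagonal_mul_diagonal, ← diagonal_smul]
  rfl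

/-- Joint diagonalizability is preserved by the balanced gradient-flow update:
if `W₀ = Q D_W Rᵀ` and `Σ = Q S Rᵀ` with orthonormal-column frames `Q, R` and
nonnegative diagonals `D_W, S`, then the update direction
`−(W₀ − Σ)(W₀ᵀW₀)^{1/2} − (W₀W₀ᵀ)^{1/2}(W₀ − Σ)` is of the form `Q D' Rᵀ` for a
diagonal `D'`; precisely, it equals `Q (2 D_W (S − D_W)) Rᵀ`. -/
theorem joint_diagonalizability_preserved (dout di D : ℕ)
    (Q : Matrix (Fin dout) (Fin D) ℝ) (R : Matrix (Fin di) (Fin D) ℝ)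
    (hQ : Qᵀ * Q = 1) (hR : Rᵀ * R = 1)
    (DW S : Fin D → ℝ) (hDW : ∀ k, 0 ≤ DW k) (hS : ∀ k, 0 ≤ S k)
    (W0 Sig : Matrix (Fin dout) (Fin di) ℝ)
    (hW0 : W0 = Q * Matrix.diagonal DW * Rᵀ)
    (hSig : Sig = Q * Matrix.diagonal S * Rᵀ)
    (h1 : (W0ᵀ * W0).PosSemidef) (h2 : (W0 * W0ᵀ).PosSemidef) :
    (∃ D' : Fin D → ℝ,
      -(W0 - Sig) * h1.sqrt - h2.sqrt * (W0 - Sig) = Q * Matrix.diagonal D' * Rᵀ) ∧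
    -(W0 - Sig) * h1.sqrt - h2.sqrt * (W0 - Sig)
      = Q * ((2 : ℝ) • (Matrix.diagonal DW * (Matrix.diagonal S - Matrix.diagonal DW))) * Rᵀ :=
  joint_diagonalizability_preserved_general dout di D Q R hQ hR DW S hDW W0 Sig hW0 hSig h1 h2
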